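/- arXiv:1109.0820 — 2 statements merged into one kernel-verified Lean document; each statement's English description precedes it below -/
import Mathlib

section
/- Let k ≥ 2, d ≥ 1, let S be a training set with ‖x_i‖_∞ ≤ 1 for all i, let (F_t, W_t, j_t) be a ShareBoost sequence for the training loss L, and let W★ ∈ ℝ^{k×d} be any matrix. Define ε_t = L(W_t) − L(W★). Then for every t, if ε_t > 0 then ε_t − ε_{t+1} ≥ ε_t² / (4 ‖W★‖²_{∞,1}). -/
open scoped BigOperators

noncomputable section

/-- The multiclass logistic loss for label `y`. -/
def mcLoss (k : ℕ) (y : Fin k) (v : Fin k → ℝ) : ℝ :=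
  Real.log (∑ y' : Fin k, Real.exp ((if y' ≠ y then (1 : ℝ) else 0) - v y + v y'))

/-- The average training loss of the matrix `W` (viewed as `Fin k → Fin d → ℝ`). -/
def trainLoss (k d m : ℕ) (x : Fin m → Fin d → ℝ) (y : Fin m → Fin k)
    (W : Fin k → Fin d → ℝ) : ℝ :=
  (1 / (m : ℝ)) * ∑ i : Fin m, mcLoss k (y i) (fun q => ∑ j : Fin d, W q j * x i j)

/-- The `r`-th column of the gradient matrix of `L` at `W`. -/
def gradCol (k d : ℕ) (L : (Fin k → Fin d → ℝ) → ℝ) (W : Fin k → Fin d → ℝ)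
    (r : Fin d) : Fin k → ℝ :=
  fun q => fderiv ℝ L W (fun q' j' => if q' = q ∧ j' = r then (1 : ℝ) else 0)

/-- A ShareBoost sequence for the training loss determined by the sample `(x, y)`. -/
structure ShareBoostSeq (k d m : ℕ) (x : Fin m → Fin d → ℝ) (y : Fin m → Fin k)
    (F : ℕ → Finset (Fin d)) (W : ℕ → Fin k → Fin d → ℝ) (jj : ℕ → Fin d) : Prop where
  F_zero : F 0 = ∅
  W_supp : ∀ t, ∀ i ∉ F t, ∀ q, W t q i = 0
  W_min : ∀ t, ∀ V : Fin k → Fin d → ℝ, (∀ i ∉ F t, ∀ q, V q i = 0) →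
    trainLoss k d m x y (W t) ≤ trainLoss k d m x y V
  j_max : ∀ t, ∀ r : Fin d,
    ∑ q : Fin k, |gradCol k d (trainLoss k d m x y) (W t) r q| ≤
      ∑ q : Fin k, |gradCol k d (trainLoss k d m x y) (W t) (jj t) q|
  F_succ : ∀ t, F (t + 1) = insert (jj t) (F t)

/-!
Write `L` for the training loss, `g` for the gradient column chosen by ShareBoost at `W_t` and
`G = ‖g‖₁`. Each summand of `L` is a log-sum-exp of an affine function of `W` minus a linear one,
so `L` is convex, and `exp z ≤ 1 + z + z²` for `|z| ≤ 1` makes it smooth: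
`L (W + Δ) ≤ L W + ⟨∇L W, Δ⟩ + η²` as soon as all entries of all `Δ xᵢ` lie in `[-η, η]`, `η ≤ 1`.
Convexity, together with the vanishing of the gradient on the columns of `F_t` at the constrained
minimiser `W_t` (the other columns of `W_t` are zero), gives `ε_t ≤ ‖W★‖_{∞,1} G`. The step
`-(G/2) sign g` in column `j_t` is admissible at time `t + 1` (and `G ≤ 2` since the logistic
gradient is bounded), so it lowers the loss by `G²/2 - G²/4`; hence
`ε_t - ε_{t+1} ≥ G²/4 ≥ ε_t² / (4 ‖W★‖²_{∞,1})`.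
-/

open Real Finset

lemma abs_sum_mul_le_norm_mul_sum_abs {ι : Type*} [Fintype ι] (a b : ι → ℝ) :
    |∑ q, a q * b q| ≤ ‖a‖ * ∑ q, |b q| := by
  rw [mul_sum]
  refine (abs_sum_le_sum_abs _ _).trans (sum_le_sum fun q _ => ?_)
  rw [abs_mul, ← Real.norm_eq_abs (a q)]
  exact mul_le_mul_of_nonneg_right (norm_le_pi_norm a q) (abs_nonneg _)

lemma one_div_mul_sum_const_le (m : ℕ) {c : ℝ} (hc : 0 ≤ c) :
    (1 / (m : ℝ)) * ∑ _i : Fin m, c ≤ c := by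
  rw [sum_const, card_univ, Fintype.card_fin, nsmul_eq_mul, ← mul_assoc, one_div_mul_eq_div]
  exact mul_le_of_le_one_left hc (div_self_le_one _)

lemma abs_sign_le_one (z : ℝ) : |(SignType.sign z : ℝ)| ≤ 1 := by
  cases SignType.sign z <;> simp

lemma fderiv_apply_eq_zero_of_isMinOn {E : Type*} [NormedAddCommGroup E] [NormedSpace ℝ E]
    {L : E → ℝ} {S : Set E} {w v : E} (hL : DifferentiableAt ℝ L w) (hmin : IsMinOn L S w)
    (hline : ∀ s : ℝ, w + s • v ∈ S) :
    fderiv ℝ L w v = 0 := by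
  have hpath : HasDerivAt (fun s : ℝ => w + s • v) v 0 := by
    simpa using ((hasDerivAt_id (0 : ℝ)).smul_const v).const_add w
  have hL' : HasFDerivAt L (fderiv ℝ L w) (w + (0 : ℝ) • v) := by
    simpa using hL.hasFDerivAt
  refine IsLocalMin.hasDerivAt_eq_zero (f := L ∘ fun s : ℝ => w + s • v)
    (Filter.Eventually.of_forall fun s => ?_) (hL'.comp_hasDerivAt (0 : ℝ) hpath)
  simpa using hmin (hline s)

section LogSumExp

variable {ι : Type*} [Fintype ι]

def logSumExp (a : ι → ℝ) : ℝ := log (∑ q, exp (a q))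

def softmax (a : ι → ℝ) (q : ι) : ℝ := exp (a q) / ∑ q', exp (a q')

variable [Nonempty ι]

lemma sum_exp_pos (a : ι → ℝ) : 0 < ∑ q, exp (a q) :=
  sum_pos (fun _ _ => exp_pos _) univ_nonempty

lemma softmax_pos (a : ι → ℝ) (q : ι) : 0 < softmax a q :=
  div_pos (exp_pos _) (sum_exp_pos a)

lemma sum_softmax (a : ι → ℝ) : ∑ q, softmax a q = 1 := by
  simp only [softmax]
  rw [← sum_div, div_self (sum_exp_pos a).ne']

lemma logSumExp_add (a b : ι → ℝ) :
    logSumExp (a + b) = logSumExp a + log (∑ q, softmax a q * exp (b q)) := by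
  have hsum : ∑ q, exp ((a + b) q) = (∑ q, exp (a q)) * ∑ q, softmax a q * exp (b q) := by
    rw [mul_sum]
    refine sum_congr rfl fun q _ => ?_
    rw [Pi.add_apply, exp_add, softmax]
    field_simp [(sum_exp_pos a).ne']
  have hpos : 0 < ∑ q, softmax a q * exp (b q) :=
    sum_pos (fun q _ => mul_pos (softmax_pos a q) (exp_pos _)) univ_nonempty
  rw [logSumExp, logSumExp, hsum, log_mul (sum_exp_pos a).ne' hpos.ne']

lemma logSumExp_add_const (a : ι → ℝ) (c : ℝ) :
    logSumExp (fun q => a q + c) = logSumExp a + c := by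
  simp only [logSumExp, exp_add, ← sum_mul]
  rw [log_mul (sum_exp_pos a).ne' (exp_pos c).ne', log_exp]

lemma hasFDerivAt_logSumExp (a : ι → ℝ) :
    HasFDerivAt logSumExp
      (∑ q, softmax a q • (ContinuousLinearMap.proj q : (ι → ℝ) →L[ℝ] ℝ)) a := by
  have hsum : HasFDerivAt (fun a : ι → ℝ => ∑ q, exp (a q))
      (∑ q, exp (a q) • (ContinuousLinearMap.proj q : (ι → ℝ) →L[ℝ] ℝ)) a :=
    HasFDerivAt.fun_sum fun q _ => (hasFDerivAt_apply q a).exp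
  refine (hsum.log (sum_exp_pos a).ne').congr_fderiv ?_
  ext b
  simp [softmax, mul_sum, div_eq_inv_mul, mul_assoc]

lemma logSumExp_add_ge (a b : ι → ℝ) :
    logSumExp a + ∑ q, softmax a q * b q ≤ logSumExp (a + b) := by
  have hjensen : exp (∑ q, softmax a q * b q) ≤ ∑ q, softmax a q * exp (b q) := by
    simpa using convexOn_exp.map_sum_le (t := univ) (w := softmax a) (p := b)
      (fun q _ => (softmax_pos a q).le) (sum_softmax a) (fun q _ => Set.mem_univ _)
  rw [logSumExp_add]
  have := log_le_log (exp_pos _) hjensen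
  rw [log_exp] at this
  linarith

lemma logSumExp_add_le (a b : ι → ℝ) {η : ℝ} (hη : η ≤ 1) (hb : ∀ q, |b q| ≤ η) :
    logSumExp (a + b) ≤ logSumExp a + ∑ q, softmax a q * b q + η ^ 2 := by
  have hexp : ∀ q, exp (b q) ≤ 1 + b q + η ^ 2 := fun q => by
    have h := (abs_le.1 (abs_exp_sub_one_sub_id_le ((hb q).trans hη))).2
    nlinarith [sq_le_sq' (neg_le_of_abs_le (hb q)) (le_of_abs_le (hb q))]
  have hmean : ∑ q, softmax a q * exp (b q) ≤ 1 + ∑ q, softmax a q * b q + η ^ 2 := by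
    calc ∑ q, softmax a q * exp (b q) ≤ ∑ q, softmax a q * (1 + b q + η ^ 2) :=
          sum_le_sum fun q _ => mul_le_mul_of_nonneg_left (hexp q) (softmax_pos a q).le
      _ = 1 + ∑ q, softmax a q * b q + η ^ 2 := by
          simp only [mul_add, mul_one, sum_add_distrib, ← sum_mul, sum_softmax, one_mul]
  rw [logSumExp_add]
  have := log_le_sub_one_of_pos (sum_pos (fun q _ => mul_pos (softmax_pos a q) (exp_pos (b q)))
    univ_nonempty)
  linarith

end LogSumExp

section MulticlassLoss

variable {k : ℕ}

def mcScores (y : Fin k) (v : Fin k → ℝ) : Fin k → ℝ :=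
  fun q => (if q ≠ y then 1 else 0) + v q

lemma mcScores_add (y : Fin k) (v u : Fin k → ℝ) : mcScores y (v + u) = mcScores y v + u := by
  ext q
  simp only [mcScores, Pi.add_apply]
  ring

lemma mcLoss_eq [NeZero k] (y : Fin k) (v : Fin k → ℝ) :
    mcLoss k y v = logSumExp (mcScores y v) - v y := by
  rw [sub_eq_add_neg, ← logSumExp_add_const]
  unfold mcLoss logSumExp mcScores
  congr 1
  refine sum_congr rfl fun q _ => ?_
  ring_nf

def mcLossDeriv (y : Fin k) (v : Fin k → ℝ) : (Fin k → ℝ) →L[ℝ] ℝ :=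
  ∑ q, softmax (mcScores y v) q • (ContinuousLinearMap.proj q : (Fin k → ℝ) →L[ℝ] ℝ) -
    ContinuousLinearMap.proj y

lemma mcLossDeriv_apply (y : Fin k) (v u : Fin k → ℝ) :
    mcLossDeriv y v u = ∑ q, softmax (mcScores y v) q * u q - u y := by
  simp [mcLossDeriv]

lemma hasFDerivAt_mcLoss [NeZero k] (y : Fin k) (v : Fin k → ℝ) :
    HasFDerivAt (mcLoss k y) (mcLossDeriv y v) v := by
  have hscores : HasFDerivAt (mcScores y) (ContinuousLinearMap.id ℝ (Fin k → ℝ)) v :=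
    (hasFDerivAt_id v).const_add (fun q => if q ≠ y then 1 else 0)
  have h := ((hasFDerivAt_logSumExp _).comp v hscores).sub (hasFDerivAt_apply y v)
  rw [show mcLoss k y = fun v => logSumExp (mcScores y v) - v y from funext (mcLoss_eq y)]
  exact h

lemma mcLoss_add_ge [NeZero k] (y : Fin k) (v u : Fin k → ℝ) :
    mcLoss k y v + mcLossDeriv y v u ≤ mcLoss k y (v + u) := by
  have h := logSumExp_add_ge (mcScores y v) u
  rw [mcLoss_eq, mcLoss_eq, mcLossDeriv_apply, mcScores_add, Pi.add_apply]
  linarith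

lemma mcLoss_add_le [NeZero k] (y : Fin k) (v u : Fin k → ℝ) {η : ℝ} (hη : η ≤ 1)
    (hu : ∀ q, |u q| ≤ η) :
    mcLoss k y (v + u) ≤ mcLoss k y v + mcLossDeriv y v u + η ^ 2 := by
  have h := logSumExp_add_le (mcScores y v) u hη hu
  rw [mcLoss_eq, mcLoss_eq, mcLossDeriv_apply, mcScores_add, Pi.add_apply]
  linarith

lemma abs_mcLossDeriv_le [NeZero k] (y : Fin k) (v u : Fin k → ℝ) {η : ℝ}
    (hu : ∀ q, |u q| ≤ η) :
    |mcLossDeriv y v u| ≤ 2 * η := by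
  have hmean : |∑ q, softmax (mcScores y v) q * u q| ≤ η := by
    calc |∑ q, softmax (mcScores y v) q * u q|
        ≤ ∑ q, softmax (mcScores y v) q * η := by
          refine (abs_sum_le_sum_abs _ _).trans (sum_le_sum fun q _ => ?_)
          rw [abs_mul, abs_of_pos (softmax_pos _ q)]
          exact mul_le_mul_of_nonneg_left (hu q) (softmax_pos _ q).le
      _ = η := by rw [← sum_mul, sum_softmax, one_mul]
  rw [mcLossDeriv_apply]
  linarith [abs_sub _ _ |>.trans (add_le_add hmean (hu y))]

end MulticlassLoss

section TrainLoss

variable {k d m : ℕ} (x : Fin m → Fin d → ℝ) (y : Fin m → Fin k)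

def mulVecCLM (v : Fin d → ℝ) : (Fin k → Fin d → ℝ) →L[ℝ] (Fin k → ℝ) :=
  LinearMap.toContinuousLinearMap
    { toFun := fun W q => ∑ j, W q j * v j
      map_add' := fun W V => by ext q; simp [add_mul, sum_add_distrib]
      map_smul' := fun c W => by ext q; simp [mul_sum, mul_assoc] }

lemma mulVecCLM_apply (v : Fin d → ℝ) (W : Fin k → Fin d → ℝ) (q : Fin k) :
    mulVecCLM v W q = ∑ j, W q j * v j := rfl

def trainLossDeriv (W : Fin k → Fin d → ℝ) : (Fin k → Fin d → ℝ) →L[ℝ] ℝ :=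
  (1 / (m : ℝ)) • ∑ i, (mcLossDeriv (y i) (mulVecCLM (x i) W)).comp (mulVecCLM (x i))

lemma trainLoss_eq (W : Fin k → Fin d → ℝ) :
    trainLoss k d m x y W = (1 / (m : ℝ)) * ∑ i, mcLoss k (y i) (mulVecCLM (x i) W) := rfl

lemma trainLossDeriv_apply (W V : Fin k → Fin d → ℝ) :
    trainLossDeriv x y W V =
      (1 / (m : ℝ)) * ∑ i, mcLossDeriv (y i) (mulVecCLM (x i) W) (mulVecCLM (x i) V) := by
  simp [trainLossDeriv]

variable [NeZero k]

lemma hasFDerivAt_trainLoss (W : Fin k → Fin d → ℝ) :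
    HasFDerivAt (trainLoss k d m x y) (trainLossDeriv x y W) W :=
  (HasFDerivAt.fun_sum fun i (_ : i ∈ univ) =>
    (hasFDerivAt_mcLoss (y i) _).comp W (mulVecCLM (x i)).hasFDerivAt).const_mul (1 / (m : ℝ))

lemma trainLoss_add_ge (W V : Fin k → Fin d → ℝ) :
    trainLoss k d m x y W + trainLossDeriv x y W V ≤ trainLoss k d m x y (W + V) := by
  rw [trainLoss_eq, trainLoss_eq, trainLossDeriv_apply, ← mul_add, ← sum_add_distrib]
  refine mul_le_mul_of_nonneg_left (sum_le_sum fun i _ => ?_) (by positivity)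
  rw [map_add]
  exact mcLoss_add_ge _ _ _

lemma trainLoss_add_le (W V : Fin k → Fin d → ℝ) {η : ℝ} (hη : η ≤ 1)
    (hV : ∀ i q, |mulVecCLM (x i) V q| ≤ η) :
    trainLoss k d m x y (W + V) ≤ trainLoss k d m x y W + trainLossDeriv x y W V + η ^ 2 := by
  have hmean := one_div_mul_sum_const_le m (sq_nonneg η)
  have hsum : ∑ i, mcLoss k (y i) (mulVecCLM (x i) (W + V)) ≤ ∑ i, (mcLoss k (y i)
      (mulVecCLM (x i) W) + mcLossDeriv (y i) (mulVecCLM (x i) W) (mulVecCLM (x i) V) + η ^ 2) :=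
    sum_le_sum fun i _ => by rw [map_add]; exact mcLoss_add_le _ _ _ hη (hV i)
  rw [trainLoss_eq, trainLoss_eq, trainLossDeriv_apply]
  rw [sum_add_distrib, sum_add_distrib] at hsum
  nlinarith [mul_le_mul_of_nonneg_left hsum (by positivity : (0 : ℝ) ≤ 1 / m)]

lemma abs_trainLossDeriv_le (W V : Fin k → Fin d → ℝ) {η : ℝ} (hη : 0 ≤ η)
    (hV : ∀ i q, |mulVecCLM (x i) V q| ≤ η) :
    |trainLossDeriv x y W V| ≤ 2 * η := by
  rw [trainLossDeriv_apply, abs_mul, abs_of_nonneg (by positivity)]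
  calc 1 / (m : ℝ) * |∑ i, mcLossDeriv (y i) (mulVecCLM (x i) W) (mulVecCLM (x i) V)|
      ≤ 1 / (m : ℝ) * ∑ _i : Fin m, 2 * η := by
        refine mul_le_mul_of_nonneg_left ((abs_sum_le_sum_abs _ _).trans ?_) (by positivity)
        exact sum_le_sum fun i _ => abs_mcLossDeriv_le _ _ _ (hV i)
    _ ≤ 2 * η := one_div_mul_sum_const_le m (by positivity)

end TrainLoss

section GradCol

variable {k d : ℕ}

lemma fderiv_apply_eq_sum_gradCol (L : (Fin k → Fin d → ℝ) → ℝ) (W V : Fin k → Fin d → ℝ) :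
    fderiv ℝ L W V = ∑ r, ∑ q, V q r * gradCol k d L W r q := by
  have hV : V = ∑ r, ∑ q, V q r • (fun q' j' => if q' = q ∧ j' = r then (1 : ℝ) else 0) := by
    ext q' j'
    simp only [Finset.sum_apply, Pi.smul_apply, smul_eq_mul, mul_ite, mul_one, mul_zero, ite_and]
    rw [sum_comm]
    simp
  conv_lhs => rw [hV]
  simp only [map_sum, map_smul, smul_eq_mul, gradCol]

def supportedOn (F : Finset (Fin d)) : Set (Fin k → Fin d → ℝ) :=
  {V | ∀ i ∉ F, ∀ q, V q i = 0}

lemma gradCol_eq_zero_of_isMinOn {L : (Fin k → Fin d → ℝ) → ℝ} {F : Finset (Fin d)}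
    {W : Fin k → Fin d → ℝ} (hL : DifferentiableAt ℝ L W) (hW : W ∈ supportedOn F)
    (hmin : IsMinOn L (supportedOn F) W) {r : Fin d} (hr : r ∈ F) :
    gradCol k d L W r = 0 := by
  ext q
  refine fderiv_apply_eq_zero_of_isMinOn hL hmin fun s i hi q' => ?_
  have hir : i ≠ r := fun h => hi (h ▸ hr)
  simp [hW i hi q', hir]

end GradCol

namespace ShareBoostSeq

variable {k d m : ℕ} [NeZero k] {x : Fin m → Fin d → ℝ} {y : Fin m → Fin k}
  {F : ℕ → Finset (Fin d)} {W : ℕ → Fin k → Fin d → ℝ} {jj : ℕ → Fin d}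

lemma gradCol_eq_zero (hSB : ShareBoostSeq k d m x y F W jj) (t : ℕ) {r : Fin d}
    (hr : r ∈ F t) : gradCol k d (trainLoss k d m x y) (W t) r = 0 :=
  gradCol_eq_zero_of_isMinOn (hasFDerivAt_trainLoss x y (W t)).differentiableAt (hSB.W_supp t)
    (fun V hV => hSB.W_min t V hV) hr

lemma trainLoss_sub_le (hSB : ShareBoostSeq k d m x y F W jj) (Wstar : Fin k → Fin d → ℝ)
    (t : ℕ) :
    trainLoss k d m x y (W t) - trainLoss k d m x y Wstar ≤
      (∑ r, ‖fun q => Wstar q r‖) * ∑ q, |gradCol k d (trainLoss k d m x y) (W t) (jj t) q| := by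
  set G := ∑ q, |gradCol k d (trainLoss k d m x y) (W t) (jj t) q|
  have hconv := trainLoss_add_ge x y (W t) (Wstar - W t)
  rw [add_sub_cancel, ← (hasFDerivAt_trainLoss x y (W t)).fderiv,
    fderiv_apply_eq_sum_gradCol] at hconv
  have hcol : ∀ r, -∑ q, (Wstar - W t) q r * gradCol k d (trainLoss k d m x y) (W t) r q ≤
      ‖fun q => Wstar q r‖ * G := by
    intro r
    by_cases hr : r ∈ F t
    · simp only [hSB.gradCol_eq_zero t hr, Pi.zero_apply, mul_zero, sum_const_zero, neg_zero]
      positivity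
    · have hWr : ∀ q, (Wstar - W t) q r = Wstar q r := fun q => by
        simp [hSB.W_supp t r hr q]
      simp only [hWr]
      calc -∑ q, Wstar q r * gradCol k d (trainLoss k d m x y) (W t) r q
          ≤ ‖fun q => Wstar q r‖ * ∑ q, |gradCol k d (trainLoss k d m x y) (W t) r q| :=
            (neg_le_abs _).trans (abs_sum_mul_le_norm_mul_sum_abs _ _)
        _ ≤ ‖fun q => Wstar q r‖ * G := mul_le_mul_of_nonneg_left (hSB.j_max t r) (norm_nonneg _)
  have := sum_le_sum fun r (_ : r ∈ univ) => hcol r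
  rw [sum_neg_distrib, ← sum_mul] at this
  linarith

lemma trainLoss_succ_le (hSB : ShareBoostSeq k d m x y F W jj) (hx : ∀ i, ‖x i‖ ≤ 1) (t : ℕ) :
    trainLoss k d m x y (W (t + 1)) ≤ trainLoss k d m x y (W t) -
      (∑ q, |gradCol k d (trainLoss k d m x y) (W t) (jj t) q|) ^ 2 / 4 := by
  set g := gradCol k d (trainLoss k d m x y) (W t) (jj t)
  set G := ∑ q, |g q|
  set Δ : Fin k → Fin d → ℝ := fun q r => if r = jj t then -(G / 2 * SignType.sign (g q)) else 0
  have hG0 : 0 ≤ G := sum_nonneg fun q _ => abs_nonneg _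
  have hDΔ : trainLossDeriv x y (W t) Δ = -(G / 2 * G) := by
    rw [← (hasFDerivAt_trainLoss x y (W t)).fderiv, fderiv_apply_eq_sum_gradCol]
    rw [sum_eq_single (jj t) (fun r _ hr => by simp [Δ, hr]) (by simp)]
    simp only [Δ, if_pos, neg_mul, sum_neg_distrib, mul_assoc, ← mul_sum]
    exact congrArg _ (congrArg _ (sum_congr rfl fun q _ => sign_mul_self (g q)))
  have hΔx : ∀ i q, |mulVecCLM (x i) Δ q| ≤ G / 2 := fun i q => by
    have hxi : |x i (jj t)| ≤ 1 := (norm_le_pi_norm (x i) (jj t)).trans (hx i)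
    simp only [mulVecCLM_apply, Δ, ite_mul, zero_mul, sum_ite_eq', mem_univ, if_true, abs_mul,
      abs_neg, abs_of_nonneg (by positivity : 0 ≤ G / 2)]
    calc G / 2 * |(SignType.sign (g q) : ℝ)| * |x i (jj t)| ≤ G / 2 * 1 * 1 := by
          gcongr
          exact abs_sign_le_one _
      _ = G / 2 := by ring
  have hG2 : G ≤ 2 := by
    have := abs_le.1 (abs_trainLossDeriv_le x y (W t) Δ (by positivity) hΔx)
    rw [hDΔ] at this
    nlinarith
  have hnext : trainLoss k d m x y (W (t + 1)) ≤ trainLoss k d m x y (W t + Δ) :=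
    hSB.W_min (t + 1) _ fun i hi q => by
      rw [hSB.F_succ t, mem_insert, not_or] at hi
      simp [Δ, hSB.W_supp t i hi.2 q, hi.1]
  have hstep := trainLoss_add_le x y (W t) Δ (by linarith) hΔx
  rw [hDΔ] at hstep
  linarith

end ShareBoostSeq

theorem shareBoost_one_step_progress_general
    (k d m : ℕ) (hk : 2 ≤ k)
    (x : Fin m → Fin d → ℝ) (y : Fin m → Fin k)
    (hx : ∀ i : Fin m, ‖x i‖ ≤ 1)
    (F : ℕ → Finset (Fin d)) (W : ℕ → Fin k → Fin d → ℝ) (jj : ℕ → Fin d)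
    (hSB : ShareBoostSeq k d m x y F W jj)
    (Wstar : Fin k → Fin d → ℝ)
    (t : ℕ)
    (hpos : 0 < trainLoss k d m x y (W t) - trainLoss k d m x y Wstar) :
    (trainLoss k d m x y (W t) - trainLoss k d m x y Wstar) -
        (trainLoss k d m x y (W (t + 1)) - trainLoss k d m x y Wstar) ≥
      (trainLoss k d m x y (W t) - trainLoss k d m x y Wstar) ^ 2 /
        (4 * (∑ r : Fin d, ‖fun q => Wstar q r‖) ^ 2) := by
  have : NeZero k := ⟨by omega⟩
  set ε := trainLoss k d m x y (W t) - trainLoss k d m x y Wstar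
  set B := ∑ r : Fin d, ‖fun q => Wstar q r‖
  set G := ∑ q, |gradCol k d (trainLoss k d m x y) (W t) (jj t) q|
  have hgap : ε ≤ B * G := hSB.trainLoss_sub_le Wstar t
  have hdecrease := hSB.trainLoss_succ_le hx t
  have hB : 0 ≤ B := sum_nonneg fun r _ => norm_nonneg _
  have hbound : ε ^ 2 / (4 * B ^ 2) ≤ G ^ 2 / 4 := by
    rcases hB.eq_or_lt with hB0 | hBpos
    · rw [← hB0, zero_pow two_ne_zero, mul_zero, div_zero]
      positivity
    · rw [div_le_div_iff₀ (by positivity) (by positivity)]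
      nlinarith [pow_le_pow_left₀ hpos.le hgap 2]
  linarith

/-- **One-step progress of ShareBoost.** With `ε_t = L(W_t) - L(W★)`, if `ε_t > 0` then
`ε_t - ε_{t+1} ≥ ε_t² / (4 ‖W★‖²_{∞,1})`. -/
theorem shareBoost_one_step_progress
    (k d m : ℕ) (hk : 2 ≤ k) (hd : 1 ≤ d) (hm : 1 ≤ m)
    (x : Fin m → Fin d → ℝ) (y : Fin m → Fin k)
    (hx : ∀ i : Fin m, ‖x i‖ ≤ 1)
    (F : ℕ → Finset (Fin d)) (W : ℕ → Fin k → Fin d → ℝ) (jj : ℕ → Fin d)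
    (hSB : ShareBoostSeq k d m x y F W jj)
    (Wstar : Fin k → Fin d → ℝ)
    (t : ℕ)
    (hpos : 0 < trainLoss k d m x y (W t) - trainLoss k d m x y Wstar) :
    (trainLoss k d m x y (W t) - trainLoss k d m x y Wstar) -
        (trainLoss k d m x y (W (t + 1)) - trainLoss k d m x y Wstar) ≥
      (trainLoss k d m x y (W t) - trainLoss k d m x y Wstar) ^ 2 /
        (4 * (∑ r : Fin d, ‖fun q => Wstar q r‖) ^ 2) :=
  shareBoost_one_step_progress_general k d m hk x y hx F W jj hSB Wstar t hpos
end
end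

section
/- Let k ≥ 2, d ≥ 1, and let S be a training set with each ‖x_i‖_∞ ≤ 1 and training loss L. Fix any W ∈ ℝ^{k×d} and any column index j ∈ {1,…,d}, and let u ∈ ℝ^k be defined by u_q = (1/2) ‖∇_j L(W)‖_1 · sgn((∇_j L(W))_q) for each q. Then L(W − u e_jᵀ) ≤ L(W) − (1/4) ‖∇_j L(W)‖_1². -/
open scoped BigOperators

noncomputable section

/-!
Along the line `t ↦ W - t • E` every per-sample loss is `log ∑_q exp (b_q - t a_q)` plus a
term linear in `t`, where `a_q` is the change of the `q`-th logit. The second derivative of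
the log-sum-exp part is the variance of `a` under the softmax weights, hence at most `M²` when
all `|a_q| ≤ M`, and Taylor's bound gives `L (W - E) ≤ L W - ∂_E L(W) + M² / 2`. For the
column step `E = u e_jᵀ`, `‖x_i‖_∞ ≤ 1` gives `M = G / 2` with `G = ‖∇_j L(W)‖₁`, while
`∂_E L(W) = ∑_q u_q (∇_j L(W))_q = G² / 2`; so the loss drops by at least `G²/2 - G²/8 ≥ G²/4`.
-/

theorem le_add_mul_add_sq_of_hasDerivAt_le {f f' f'' : ℝ → ℝ} {C a b : ℝ}
    (hf : ∀ t, HasDerivAt f (f' t) t) (hf' : ∀ t, HasDerivAt f' (f'' t) t)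
    (hC : ∀ t, f'' t ≤ C) (hab : a ≤ b) :
    f b ≤ f a + f' a * (b - a) + C * (b - a) ^ 2 / 2 := by
  have hslope : ∀ t ∈ Set.Icc a b, f' t ≤ f' a + C * (t - a) := by
    refine image_le_of_deriv_right_le_deriv_boundary
      (fun t _ => (hf' t).continuousAt.continuousWithinAt) (fun t _ => (hf' t).hasDerivWithinAt)
      (B' := fun _ => C) (by simp) (by fun_prop) (fun t _ => ?_) (fun t _ => hC t)
    simpa using (((hasDerivAt_id t).sub_const a).const_mul C).const_add (f' a) |>.hasDerivWithinAt
  refine image_le_of_deriv_right_le_deriv_boundary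
    (fun t _ => (hf t).continuousAt.continuousWithinAt) (fun t _ => (hf t).hasDerivWithinAt)
    (B := fun t => f a + f' a * (t - a) + C * (t - a) ^ 2 / 2)
    (B' := fun t => f' a + C * (t - a)) (by simp) (by fun_prop) (fun t _ => ?_)
    (fun t ht => hslope t (Set.Ico_subset_Icc_self ht)) ⟨hab, le_rfl⟩
  have h := (hasDerivAt_id t).sub_const a
  exact (((h.const_mul (f' a)).const_add (f a)).fun_add
    ((h.fun_pow 2).const_mul C |>.div_const 2)).hasDerivWithinAt.congr_deriv
      (by simp only [id_eq, Nat.cast_ofNat, Nat.add_one_sub_one, pow_one]; ring)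

theorem Real.sign_mul_self_eq_abs (r : ℝ) : Real.sign r * r = |r| := by
  rcases lt_trichotomy r 0 with h | rfl | h
  · rw [Real.sign_of_neg h, abs_of_neg h]; ring
  · simp
  · rw [Real.sign_of_pos h, abs_of_pos h]; ring

theorem Real.abs_sign_le_one (r : ℝ) : |Real.sign r| ≤ 1 := by
  rcases Real.sign_apply_eq r with h | h | h <;> simp [h]

section ExpMoment

variable {ι : Type*} [Fintype ι] (b a : ι → ℝ)

def expMoment (n : ℕ) (t : ℝ) : ℝ := ∑ q, Real.exp (b q + t * a q) * a q ^ n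

theorem hasDerivAt_expMoment (n : ℕ) (t : ℝ) :
    HasDerivAt (expMoment b a n) (expMoment b a (n + 1) t) t := by
  refine HasDerivAt.fun_sum fun q _ => ?_
  exact ((((hasDerivAt_id t).mul_const (a q)).const_add (b q)).exp.mul_const (a q ^ n)).congr_deriv
    (by simp only [id_eq, one_mul]; ring)

theorem expMoment_zero_pos [Nonempty ι] (t : ℝ) : 0 < expMoment b a 0 t :=
  Finset.sum_pos (fun q _ => by simp [Real.exp_pos]) Finset.univ_nonempty

theorem expMoment_two_le {M : ℝ} (hM : ∀ q, |a q| ≤ M) (t : ℝ) :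
    expMoment b a 2 t ≤ M ^ 2 * expMoment b a 0 t := by
  rw [expMoment, expMoment, Finset.mul_sum]
  refine Finset.sum_le_sum fun q _ => ?_
  have hsq : a q ^ 2 ≤ M ^ 2 := by
    simpa only [sq_abs] using pow_le_pow_left₀ (abs_nonneg _) (hM q) 2
  calc Real.exp (b q + t * a q) * a q ^ 2 ≤ Real.exp (b q + t * a q) * M ^ 2 :=
        mul_le_mul_of_nonneg_left hsq (Real.exp_pos _).le
    _ = M ^ 2 * (Real.exp (b q + t * a q) * a q ^ 0) := by ring

theorem log_expMoment_zero_le [Nonempty ι] {M : ℝ} (hM : ∀ q, |a q| ≤ M) :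
    Real.log (expMoment b a 0 1) ≤
      Real.log (expMoment b a 0 0) + expMoment b a 1 0 / expMoment b a 0 0 + M ^ 2 / 2 := by
  have hpos := expMoment_zero_pos b a
  have hcurv : ∀ t, (expMoment b a 2 t * expMoment b a 0 t -
      expMoment b a 1 t * expMoment b a 1 t) / expMoment b a 0 t ^ 2 ≤ M ^ 2 := fun t => by
    rw [div_le_iff₀ (pow_pos (hpos t) 2)]
    nlinarith [sq_nonneg (expMoment b a 1 t), hpos t,
      mul_le_mul_of_nonneg_right (expMoment_two_le b a hM t) (hpos t).le]
  simpa using le_add_mul_add_sq_of_hasDerivAt_le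
    (fun t => (hasDerivAt_expMoment b a 0 t).log (hpos t).ne')
    (fun t => (hasDerivAt_expMoment b a 1 t).div (hasDerivAt_expMoment b a 0 t) (hpos t).ne')
    hcurv zero_le_one

end ExpMoment

section Loss

variable {k d m : ℕ}

theorem mcLoss_eq_log_sub (y : Fin k) (v : Fin k → ℝ) :
    mcLoss k y v = Real.log (∑ y', Real.exp ((if y' ≠ y then 1 else 0) + v y')) - v y := by
  have hpos : 0 < ∑ y', Real.exp ((if y' ≠ y then 1 else 0) + v y') :=
    Finset.sum_pos (fun _ _ => Real.exp_pos _) ⟨y, Finset.mem_univ y⟩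
  have hshift : ∑ y', Real.exp ((if y' ≠ y then (1 : ℝ) else 0) - v y + v y') =
      (∑ y', Real.exp ((if y' ≠ y then 1 else 0) + v y')) / Real.exp (v y) := by
    rw [Finset.sum_div]
    exact Finset.sum_congr rfl fun y' _ => by rw [← Real.exp_sub]; ring_nf
  rw [mcLoss, hshift, Real.log_div hpos.ne' (Real.exp_pos _).ne', Real.log_exp]

@[fun_prop]
theorem differentiable_mcLoss (y : Fin k) : Differentiable ℝ (mcLoss k y) :=
  Differentiable.log (by fun_prop) fun _ =>
    (Finset.sum_pos (fun _ _ => Real.exp_pos _) ⟨y, Finset.mem_univ y⟩).ne'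

theorem mcLoss_sub_le (y : Fin k) (v w : Fin k → ℝ) {M : ℝ} (hw : ∀ q, |w q| ≤ M) :
    mcLoss k y (v - w) ≤
      mcLoss k y v + deriv (fun t : ℝ => mcLoss k y (v - t • w)) 0 + M ^ 2 / 2 := by
  have : Nonempty (Fin k) := ⟨y⟩
  set b : Fin k → ℝ := fun y' => (if y' ≠ y then 1 else 0) + v y'
  have hline : (fun t : ℝ => mcLoss k y (v - t • w)) =
      fun t => Real.log (expMoment b (-w) 0 t) - v y + t * w y := by
    funext t
    have hsum : expMoment b (-w) 0 t =
        ∑ y', Real.exp ((if y' ≠ y then 1 else 0) + (v - t • w) y') :=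
      Finset.sum_congr rfl fun y' _ => by
        simp only [b, Pi.sub_apply, Pi.smul_apply, Pi.neg_apply, smul_eq_mul, pow_zero, mul_one]
        ring_nf
    rw [mcLoss_eq_log_sub, hsum]
    simp only [Pi.sub_apply, Pi.smul_apply, smul_eq_mul]
    ring
  have hderiv : HasDerivAt (fun t => Real.log (expMoment b (-w) 0 t) - v y + t * w y)
      (expMoment b (-w) 1 0 / expMoment b (-w) 0 0 + w y) 0 :=
    ((((hasDerivAt_expMoment b (-w) 0 0).log (expMoment_zero_pos b (-w) 0).ne').sub_const
      (v y)).fun_add ((hasDerivAt_id' 0).mul_const (w y))).congr_deriv (by rw [one_mul])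
  have h1 := congrFun hline 1
  have h0 := congrFun hline 0
  simp only [one_smul, zero_smul, sub_zero, one_mul, zero_mul, add_zero] at h1 h0
  have := log_expMoment_zero_le b (-w) (M := M) (fun q => by simpa using hw q)
  rw [hline, hderiv.deriv]
  linarith

theorem differentiable_trainLoss (x : Fin m → Fin d → ℝ) (y : Fin m → Fin k) :
    Differentiable ℝ (trainLoss k d m x y) := by
  unfold trainLoss
  fun_prop

theorem trainLoss_sub_le (x : Fin m → Fin d → ℝ) (y : Fin m → Fin k)
    (W E : Fin k → Fin d → ℝ) {M : ℝ} (hE : ∀ i q, |∑ j, E q j * x i j| ≤ M) :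
    trainLoss k d m x y (W - E) ≤
      trainLoss k d m x y W - fderiv ℝ (trainLoss k d m x y) W E + M ^ 2 / 2 := by
  set L := trainLoss k d m x y
  set logits : (Fin k → Fin d → ℝ) → Fin m → Fin k → ℝ := fun V i q => ∑ j, V q j * x i j
  set f : Fin m → ℝ → ℝ := fun i t => mcLoss k (y i) (logits W i - t • logits E i)
  have hline : (fun t : ℝ => L (W - t • E)) = fun t => (1 / (m : ℝ)) * ∑ i, f i t := by
    funext t
    simp only [L, f, logits, trainLoss]
    congr! with i
    simp only [Pi.sub_apply, Pi.smul_apply, smul_eq_mul, sub_mul, Finset.sum_sub_distrib,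
      Finset.mul_sum, mul_assoc]
  have hchain : HasDerivAt (fun t : ℝ => L (W - t • E)) (-fderiv ℝ L W E) 0 := by
    have h := (differentiable_trainLoss x y W).hasFDerivAt.comp_hasDerivAt_of_eq 0
      (((hasDerivAt_id' (0 : ℝ)).smul_const E).const_sub W) (by rw [zero_smul, sub_zero])
    rw [one_smul, map_neg] at h
    exact h
  have hsum :
      HasDerivAt (fun t : ℝ => L (W - t • E)) ((1 / (m : ℝ)) * ∑ i, deriv (f i) 0) 0 := by
    have hf : ∀ i, DifferentiableAt ℝ (f i) 0 := fun i => by fun_prop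
    rw [hline]
    exact (HasDerivAt.fun_sum fun i _ => (hf i).hasDerivAt).const_mul _
  have hsample : ∀ i, f i 1 ≤ f i 0 + deriv (f i) 0 + M ^ 2 / 2 := fun i => by
    simpa [f] using mcLoss_sub_le (y i) (logits W i) (logits E i) (hE i)
  have h1 := congrFun hline 1
  have h0 := congrFun hline 0
  simp only [one_smul, zero_smul, sub_zero] at h1 h0
  have hslope := hchain.unique hsum
  have hM : (m : ℝ) / m * (M ^ 2 / 2) ≤ M ^ 2 / 2 :=
    mul_le_of_le_one_left (by positivity) (div_self_le_one _)
  calc L (W - E) ≤ (1 / (m : ℝ)) * ∑ i, (f i 0 + deriv (f i) 0 + M ^ 2 / 2) := by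
        rw [h1]; gcongr with i; exact hsample i
    _ = L W - fderiv ℝ L W E + (m : ℝ) / m * (M ^ 2 / 2) := by
        rw [h0, neg_eq_iff_eq_neg.mp hslope, Finset.sum_add_distrib, Finset.sum_add_distrib,
          Finset.sum_const, Finset.card_univ, Fintype.card_fin, nsmul_eq_mul]
        ring
    _ ≤ L W - fderiv ℝ L W E + M ^ 2 / 2 := by linarith

end Loss

theorem fderiv_column_eq_sum_gradCol {k d : ℕ} (L : (Fin k → Fin d → ℝ) → ℝ)
    (W : Fin k → Fin d → ℝ) (j : Fin d) (u : Fin k → ℝ) :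
    fderiv ℝ L W (fun q i => if i = j then u q else 0) = ∑ q, u q * gradCol k d L W j q := by
  have hcol : (fun q i => if i = j then u q else 0) =
      ∑ q, u q • fun q' j' => if q' = q ∧ j' = j then (1 : ℝ) else 0 := by
    ext q' i
    simp [Finset.sum_apply, ite_and]
  rw [hcol, map_sum]
  simp [gradCol]

theorem shareBoost_gradient_step_decrease_general
    (k d m : ℕ)
    (x : Fin m → Fin d → ℝ) (y : Fin m → Fin k)
    (hx : ∀ i : Fin m, ‖x i‖ ≤ 1)
    (W : Fin k → Fin d → ℝ) (j : Fin d)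
    (u : Fin k → ℝ)
    (hu : ∀ q, u q = (1 / 2) * (∑ p : Fin k, |gradCol k d (trainLoss k d m x y) W j p|) *
      Real.sign (gradCol k d (trainLoss k d m x y) W j q)) :
    trainLoss k d m x y (fun q i => W q i - if i = j then u q else 0) ≤
      trainLoss k d m x y W -
        (1 / 4) * (∑ q : Fin k, |gradCol k d (trainLoss k d m x y) W j q|) ^ 2 := by
  set g := gradCol k d (trainLoss k d m x y) W j
  set G := ∑ q, |g q|
  have hG : 0 ≤ 1 / 2 * G := by positivity
  have hu_le : ∀ q, |u q| ≤ G / 2 := fun q => by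
    rw [hu q, abs_mul, abs_of_nonneg hG]
    exact (mul_le_of_le_one_right hG (Real.abs_sign_le_one _)).trans_eq (by ring)
  have hstep : ∀ i q, |∑ j', (if j' = j then u q else 0) * x i j'| ≤ G / 2 := fun i q => by
    have hxij : |x i j| ≤ 1 := (norm_le_pi_norm (x i) j).trans (hx i)
    simp only [ite_mul, zero_mul, Finset.sum_ite_eq', Finset.mem_univ, if_true, abs_mul]
    exact (mul_le_of_le_one_right (abs_nonneg _) hxij).trans (hu_le q)
  have hslope :
      fderiv ℝ (trainLoss k d m x y) W (fun q i => if i = j then u q else 0) = G ^ 2 / 2 := by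
    rw [fderiv_column_eq_sum_gradCol]
    calc ∑ q, u q * g q = ∑ q, 1 / 2 * G * (Real.sign (g q) * g q) :=
          Finset.sum_congr rfl fun q _ => by rw [hu q]; ring
      _ = G ^ 2 / 2 := by simp only [Real.sign_mul_self_eq_abs, ← Finset.mul_sum]; ring
  calc _ ≤ _ := trainLoss_sub_le x y W (fun q i => if i = j then u q else 0) hstep
    _ ≤ _ := by rw [hslope]; nlinarith

/-- **Guaranteed decrease from the gradient step.** With
`u_q = (1/2) ‖∇_j L(W)‖₁ · sgn((∇_j L(W))_q)`, one has
`L(W - u eⱼᵀ) ≤ L(W) - (1/4) ‖∇_j L(W)‖₁²`. -/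
theorem shareBoost_gradient_step_decrease
    (k d m : ℕ) (hk : 2 ≤ k) (hd : 1 ≤ d) (hm : 1 ≤ m)
    (x : Fin m → Fin d → ℝ) (y : Fin m → Fin k)
    (hx : ∀ i : Fin m, ‖x i‖ ≤ 1)
    (W : Fin k → Fin d → ℝ) (j : Fin d)
    (u : Fin k → ℝ)
    (hu : ∀ q, u q = (1 / 2) * (∑ p : Fin k, |gradCol k d (trainLoss k d m x y) W j p|) *
      Real.sign (gradCol k d (trainLoss k d m x y) W j q)) :
    trainLoss k d m x y (fun q i => W q i - if i = j then u q else 0) ≤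
      trainLoss k d m x y W -
        (1 / 4) * (∑ q : Fin k, |gradCol k d (trainLoss k d m x y) W j q|) ^ 2 :=
  shareBoost_gradient_step_decrease_general k d m x y hx W j u hu
end
end
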